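/- arXiv:1701.07324 — 2 statements merged into one kernel-verified Lean document; each statement's English description precedes it below -/
import Mathlib

section
/- Let D and D' be division rings with |D| > |D'| and D infinite, and let m, n, m', n' ≥ 1 be integers. Then there is no graph homomorphism from D^{m×n} to D'^{m'×n'}. -/
/-!
All matrices `a • E₁₁`, `a ∈ D`, are pairwise adjacent, and a graph homomorphism cannot identify
two adjacent vertices (their images would differ by a matrix of rank `0`). So a homomorphism is
injective on this line, which is impossible because `D'^{m'×n'}` has fewer elements than `D`:
it is finite if `D'` is, and has the cardinality of `D'` otherwise.
-/

open Matrix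

/-- Rank of a matrix over a division ring: dimension of the left row space. -/
noncomputable def mrank {D : Type} [DivisionRing D] {m n : ℕ} (A : Matrix (Fin m) (Fin n) D) : ℕ :=
  Module.finrank D (Submodule.span D (Set.range fun i : Fin m => fun j : Fin n => A i j))

universe u

open Cardinal in
theorem mk_pi_lt_of_mk_lt {ι α β : Type u} [Finite ι] [Infinite β] (h : #α < #β) :
    #(ι → α) < #β := by
  rcases finite_or_infinite α with hα | hα
  · exact (lt_aleph0_of_finite _).trans_le (aleph0_le_mk β)
  · calc #(ι → α) = #α ^ #ι := by simp
      _ ≤ #α := pow_le (aleph0_le_mk α) (lt_aleph0_of_finite ι)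
      _ < #β := h

theorem Matrix.single_sub {m n α : Type*} [DecidableEq m] [DecidableEq n] [AddGroup α]
    (i : m) (j : n) (a b : α) :
    single i j (a - b) = single i j a - single i j b := by
  simp only [single_eq_of_single_single, Pi.single_sub, of_sub_of]

section

variable {D : Type} [DivisionRing D] {m n : ℕ}

theorem mrank_zero : mrank (0 : Matrix (Fin m) (Fin n) D) = 0 := by
  rw [mrank, Submodule.span_eq_bot.2, finrank_bot]
  rintro _ ⟨i, rfl⟩
  rfl

theorem mrank_single (i : Fin m) (j : Fin n) {a : D} (ha : a ≠ 0) :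
    mrank (single i j a) = 1 := by
  have hrows : Submodule.span D (Set.range fun i' j' => single i j a i' j') =
      Submodule.span D {Pi.single j a} := by
    simp only [single_eq_of_single_single, of_apply]
    apply le_antisymm
    · rw [Submodule.span_le]
      rintro _ ⟨i', rfl⟩
      rcases eq_or_ne i' i with rfl | hi
      · simp [Submodule.mem_span_singleton_self]
      · simp [hi, ← Pi.zero_def]
    · rw [Submodule.span_singleton_le_iff_mem]
      exact Submodule.subset_span ⟨i, by simp⟩
  rw [mrank, hrows, finrank_span_singleton]
  simpa using ha

theorem injective_single_of_preserves_adj {D' : Type} [DivisionRing D'] {m' n' : ℕ}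
    {φ : Matrix (Fin m) (Fin n) D → Matrix (Fin m') (Fin n') D'}
    (hφ : ∀ X Y, mrank (X - Y) = 1 → mrank (φ X - φ Y) = 1) (i : Fin m) (j : Fin n) :
    Function.Injective fun a => φ (single i j a) := by
  intro a b (hab : φ (single i j a) = φ (single i j b))
  by_contra hne
  have hadj := hφ _ _ (single_sub i j a b ▸ mrank_single i j (sub_ne_zero.2 hne))
  rw [hab, sub_self, mrank_zero] at hadj
  exact zero_ne_one hadj

end

theorem no_graph_hom_of_card_gt_general
    {D D' : Type} [DivisionRing D] [DivisionRing D'] {m n m' n' : ℕ}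
    (hm : 1 ≤ m) (hn : 1 ≤ n)
    (hcard : Cardinal.mk D' < Cardinal.mk D) (hinf : Infinite D) :
    ¬ ∃ φ : Matrix (Fin m) (Fin n) D → Matrix (Fin m') (Fin n') D',
        ∀ X Y, mrank (X - Y) = 1 → mrank (φ X - φ Y) = 1 := by
  rintro ⟨φ, hφ⟩
  have hsmall : Cardinal.mk (Matrix (Fin m') (Fin n') D') < Cardinal.mk D :=
    mk_pi_lt_of_mk_lt (mk_pi_lt_of_mk_lt hcard)
  exact hsmall.not_ge <|
    Cardinal.mk_le_of_injective (injective_single_of_preserves_adj hφ ⟨0, hm⟩ ⟨0, hn⟩)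

/-- Example 2.7: if `|D| > |D'|` and `D` is infinite, there is no graph homomorphism from
`D^{m×n}` to `D'^{m'×n'}`. -/
theorem no_graph_hom_of_card_gt
    {D D' : Type} [DivisionRing D] [DivisionRing D'] {m n m' n' : ℕ}
    (hm : 1 ≤ m) (hn : 1 ≤ n) (hm' : 1 ≤ m') (hn' : 1 ≤ n')
    (hcard : Cardinal.mk D' < Cardinal.mk D) (hinf : Infinite D) :
    ¬ ∃ φ : Matrix (Fin m) (Fin n) D → Matrix (Fin m') (Fin n') D',
        ∀ X Y, mrank (X - Y) = 1 → mrank (φ X - φ Y) = 1 :=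
  no_graph_hom_of_card_gt_general hm hn hcard hinf
end

section
/- Let D and D' be division rings, m, n, m', n' ≥ 2, and let φ: D^{m×n} → D'^{m'×n'} be a non-degenerate graph homomorphism with φ(0) = 0. Suppose M is a maximal set containing 0 in D^{m×n} and φ(M) ⊆ M' for some maximal set M' in D'^{m'×n'}. Then M' is the unique maximal set containing φ(M), and φ(M) is not contained in any line of M'. -/
open Matrix

/-- The standard maximal set of type one: matrices whose rows other than the first are zero. -/
def M1set (D : Type) [DivisionRing D] (m n : ℕ) : Set (Matrix (Fin m) (Fin n) D) :=
  {X | ∀ i j, i.val ≠ 0 → X i j = 0}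

/-- The standard maximal set of type two: matrices whose columns other than the first are zero. -/
def N1set (D : Type) [DivisionRing D] (m n : ℕ) : Set (Matrix (Fin m) (Fin n) D) :=
  {X | ∀ i j, j.val ≠ 0 → X i j = 0}

/-- A maximal set of type one: a set of the form `P·M₁ + A` with `P` invertible. -/
def IsTypeOne {D : Type} [DivisionRing D] {m n : ℕ} (S : Set (Matrix (Fin m) (Fin n) D)) : Prop :=
  ∃ P : Matrix (Fin m) (Fin m) D, ∃ A : Matrix (Fin m) (Fin n) D,
    IsUnit P ∧ S = (fun X => P * X + A) '' M1set D m n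

/-- A maximal set of type two: a set of the form `N₁·Q + A` with `Q` invertible. -/
def IsTypeTwo {D : Type} [DivisionRing D] {m n : ℕ} (S : Set (Matrix (Fin m) (Fin n) D)) : Prop :=
  ∃ Q : Matrix (Fin n) (Fin n) D, ∃ A : Matrix (Fin m) (Fin n) D,
    IsUnit Q ∧ S = (fun X => X * Q + A) '' N1set D m n

/-- A maximal set (maximal clique of the adjacency graph): of type one or type two. -/
def IsMaximalSet {D : Type} [DivisionRing D] {m n : ℕ}
    (S : Set (Matrix (Fin m) (Fin n) D)) : Prop :=
  IsTypeOne S ∨ IsTypeTwo S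

/-- A graph homomorphism `φ` is degenerate if there is a matrix `A` of rank at most one and two
maximal sets of different types `Ms`, `Ns` in the target with `φ A ∈ Ms ∩ Ns` and the image of
the unit ball around `A` contained in `Ms ∪ Ns`. -/
def Degenerate {D D' : Type} [DivisionRing D] [DivisionRing D'] {m n m' n' : ℕ}
    (φ : Matrix (Fin m) (Fin n) D → Matrix (Fin m') (Fin n') D') : Prop :=
  ∃ A : Matrix (Fin m) (Fin n) D, mrank A ≤ 1 ∧
    ∃ Ms Ns : Set (Matrix (Fin m') (Fin n') D'),
      IsTypeOne Ms ∧ IsTypeTwo Ns ∧ φ A ∈ Ms ∩ Ns ∧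
      φ '' {X | mrank (X - A) ≤ 1} ⊆ Ms ∪ Ns

/-!
Maximal sets through `0` are `{vecMulVec c r | r}` (type one, `c ≠ 0`) and `{vecMulVec t r | t}`
(type two, `r ≠ 0`). Suppose `φ(M)` lay in maximal sets `Ms`, `Ns` of different types. A rank-one
`X ∉ M` is adjacent to some rank-one `Y ∈ M`, so `0`, `φ Y`, `φ X` are pairwise adjacent; since
`φ Y ≠ 0` lies in `Ms ∩ Ns`, this forces `φ X ∈ Ms ∪ Ns`, i.e. `φ` is degenerate at `A = 0`.
Hence `φ(M)` lies in no line of `M'` and in no maximal set of the other type, while two maximal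
sets of the same type sharing `0` and `φ Y` coincide.
-/

open Module Submodule

section RankOne

variable {D : Type} [DivisionRing D] {m n : ℕ}

theorem exists_smul_eq_of_finrank_span_range_le_one {N ι : Type*} [AddCommGroup N] [Module D N]
    [Finite ι] {f : ι → N} (hf : finrank D (span D (Set.range f)) ≤ 1) {i₀ : ι}
    (hi₀ : f i₀ ≠ 0) (i : ι) : ∃ a : D, a • f i₀ = f i := by
  have : FiniteDimensional D (span D (Set.range f)) :=
    FiniteDimensional.span_of_finite D (Set.finite_range f)
  have hspan : span D {f i₀} = span D (Set.range f) :=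
    eq_of_le_of_finrank_le (span_mono (Set.singleton_subset_iff.mpr ⟨i₀, rfl⟩))
      (hf.trans (finrank_span_singleton hi₀).ge)
  exact mem_span_singleton.mp (hspan ▸ subset_span ⟨i, rfl⟩)

theorem mrank_eq_zero_iff {A : Matrix (Fin m) (Fin n) D} : mrank A = 0 ↔ A = 0 := by
  have : FiniteDimensional D (span D (Set.range A)) :=
    FiniteDimensional.span_of_finite D (Set.finite_range A)
  rw [mrank, Submodule.finrank_eq_zero, span_eq_bot, Set.forall_mem_range, ← funext_iff]
  rfl

theorem mrank_vecMulVec_le_one (c : Fin m → D) (r : Fin n → D) : mrank (vecMulVec c r) ≤ 1 := by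
  calc mrank (vecMulVec c r) ≤ finrank D (span D {r}) :=
        finrank_mono (span_le.mpr (Set.range_subset_iff.mpr fun i =>
          smul_mem _ (c i) (mem_span_singleton_self r)))
    _ ≤ 1 := by simpa using finrank_span_le_card ({r} : Set (Fin n → D))

theorem mrank_eq_one_of_mrank_le_one {A : Matrix (Fin m) (Fin n) D} (hA : mrank A ≤ 1)
    (hA₀ : A ≠ 0) : mrank A = 1 := by
  have := mrank_eq_zero_iff.not.mpr hA₀
  omega

theorem ne_zero_and_ne_zero_of_vecMulVec_ne_zero {c : Fin m → D} {r : Fin n → D}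
    (h : vecMulVec c r ≠ 0) : c ≠ 0 ∧ r ≠ 0 :=
  ⟨by rintro rfl; exact h (zero_vecMulVec r),
    by rintro rfl; exact h (Matrix.ext fun _ _ => mul_zero _)⟩

theorem mrank_vecMulVec {c : Fin m → D} {r : Fin n → D} (hc : c ≠ 0) (hr : r ≠ 0) :
    mrank (vecMulVec c r) = 1 := by
  obtain ⟨i, hi⟩ := Function.ne_iff.mp hc
  obtain ⟨j, hj⟩ := Function.ne_iff.mp hr
  refine mrank_eq_one_of_mrank_le_one (mrank_vecMulVec_le_one c r) fun h => ?_
  exact mul_ne_zero hi hj congr($h i j)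

theorem exists_eq_vecMulVec_of_mrank_le_one {A : Matrix (Fin m) (Fin n) D} (hA : mrank A ≤ 1) :
    ∃ c r, A = vecMulVec c r := by
  rcases eq_or_ne A 0 with rfl | hA₀
  · exact ⟨0, 0, (zero_vecMulVec 0).symm⟩
  obtain ⟨i₀, hi₀⟩ := Function.ne_iff.mp hA₀
  choose c hc using exists_smul_eq_of_finrank_span_range_le_one hA hi₀
  exact ⟨c, A i₀, Matrix.ext fun i j => (congr_fun (hc i) j).symm⟩

end RankOne

section Proportional

variable {D : Type} [DivisionRing D] {m n : ℕ}

theorem exists_eq_op_smul_of_vecMulVec_eq {c c' : Fin m → D} {r r' : Fin n → D}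
    (h : vecMulVec c r = vecMulVec c' r') (h₀ : vecMulVec c r ≠ 0) :
    ∃ a : D, a ≠ 0 ∧ c = MulOpposite.op a • c' ∧ r' = a • r := by
  obtain ⟨i, j, hij⟩ : ∃ i j, c i * r j ≠ 0 := by
    by_contra! H
    exact h₀ (Matrix.ext H)
  have hrj : r j ≠ 0 := right_ne_zero_of_mul hij
  have hc : ∀ k, c k = c' k * (r' j * (r j)⁻¹) := fun k => by
    rw [← mul_assoc, ← vecMulVec_apply c' r', ← h, vecMulVec_apply, mul_inv_cancel_right₀ hrj]
  have hc'i : c' i ≠ 0 := by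
    rw [← vecMulVec_apply, h] at hij
    exact left_ne_zero_of_mul hij
  refine ⟨r' j * (r j)⁻¹, fun ha => left_ne_zero_of_mul hij ?_, funext hc, funext fun k => ?_⟩
  · rw [hc, ha, mul_zero]
  · refine mul_left_cancel₀ hc'i ?_
    rw [Pi.smul_apply, smul_eq_mul, ← mul_assoc, ← hc, ← vecMulVec_apply c' r', ← h,
      vecMulVec_apply]

theorem range_vecMulVec_eq_of_vecMulVec_eq {c c' : Fin m → D} {r r' : Fin n → D}
    (h : vecMulVec c r = vecMulVec c' r') (h₀ : vecMulVec c r ≠ 0) :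
    Set.range (vecMulVec c : (Fin n → D) → _) = Set.range (vecMulVec c') := by
  obtain ⟨a, ha, rfl, -⟩ := exists_eq_op_smul_of_vecMulVec_eq h h₀
  have : vecMulVec (MulOpposite.op a • c') = vecMulVec c' ∘ (a • · : (Fin n → D) → _) :=
    funext fun x => (vecMulVec_smul' c' a x).symm
  rw [this, Function.Surjective.range_comp fun x => ⟨a⁻¹ • x, smul_inv_smul₀ ha x⟩]

theorem range_vecMulVec_left_eq_of_vecMulVec_eq {c c' : Fin m → D} {r r' : Fin n → D}
    (h : vecMulVec c r = vecMulVec c' r') (h₀ : vecMulVec c r ≠ 0) :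
    Set.range (fun t : Fin m → D => vecMulVec t r) = Set.range fun t => vecMulVec t r' := by
  obtain ⟨a, ha, -, rfl⟩ := exists_eq_op_smul_of_vecMulVec_eq h h₀
  have ha' : MulOpposite.op a ≠ 0 := MulOpposite.op_ne_zero_iff a |>.mpr ha
  have : (fun t => vecMulVec t (a • r)) = (fun t => vecMulVec t r) ∘
      (MulOpposite.op a • · : (Fin m → D) → _) :=
    funext fun t => vecMulVec_smul' t a r
  rw [this, Function.Surjective.range_comp fun x => ⟨(MulOpposite.op a)⁻¹ • x,
    smul_inv_smul₀ ha' x⟩]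

end Proportional

section Adjacency

variable {D : Type} [DivisionRing D] {m n : ℕ}

theorem vecMulVec_mem_range_of_mrank_sub_le_one {c u : Fin m → D} {s v : Fin n → D}
    (hc : c ≠ 0) (hsv : LinearIndependent D ![s, v])
    (h : mrank (vecMulVec u v - vecMulVec c s) ≤ 1) :
    vecMulVec u v ∈ Set.range (vecMulVec c) := by
  -- The rows `u i • v - c i • s` are all proportional and `s, v` are independent, so the
  -- coefficient vectors `u` and `c` are proportional too.
  have hind := LinearIndependent.pair_iff.mp hsv
  have hrow : ∀ i, (vecMulVec u v - vecMulVec c s) i = (-c i) • s + u i • v := fun i => by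
    ext j
    simp only [Matrix.sub_apply, vecMulVec_apply, Pi.add_apply, Pi.smul_apply, smul_eq_mul,
      neg_mul, neg_add_eq_sub]
  obtain ⟨i₀, hi₀⟩ := Function.ne_iff.mp hc
  have hrow₀ : (vecMulVec u v - vecMulVec c s) i₀ ≠ 0 := by
    rw [hrow]
    exact fun h₀ => hi₀ (neg_eq_zero.mp (hind _ _ h₀).1)
  refine ⟨((c i₀)⁻¹ * u i₀) • v, Matrix.ext fun i j => ?_⟩
  obtain ⟨a, ha⟩ := exists_smul_eq_of_finrank_span_range_le_one h hrow₀ i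
  replace ha : a • ((-c i₀) • s + u i₀ • v) = (-c i) • s + u i • v := by
    rw [← hrow, ← hrow]
    exact ha
  have hcomb : (a * -c i₀ + c i) • s + (a * u i₀ - u i) • v = 0 := by
    rw [← sub_eq_zero.mpr ha]
    simp only [add_smul, sub_smul, mul_smul, smul_add, neg_smul]
    abel
  obtain ⟨hci, hui⟩ := hind _ _ hcomb
  rw [mul_neg, neg_add_eq_zero] at hci
  rw [sub_eq_zero] at hui
  simp only [vecMulVec_apply, Pi.smul_apply, smul_eq_mul, ← hci, ← hui, mul_assoc,
    mul_inv_cancel_left₀ hi₀]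

theorem mem_range_union_of_mrank_le_one_of_mrank_sub_le_one {c : Fin m → D} {r : Fin n → D}
    {Z₀ Z : Matrix (Fin m) (Fin n) D} (hZ₀c : Z₀ ∈ Set.range (vecMulVec c))
    (hZ₀r : Z₀ ∈ Set.range fun t => vecMulVec t r) (hZ₀ : Z₀ ≠ 0) (hZ : mrank Z ≤ 1)
    (hZZ₀ : mrank (Z - Z₀) ≤ 1) :
    Z ∈ Set.range (vecMulVec c) ∪ Set.range fun t => vecMulVec t r := by
  obtain ⟨s, rfl⟩ := hZ₀c
  obtain ⟨t, hts : vecMulVec t r = vecMulVec c s⟩ := hZ₀r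
  obtain ⟨u, v, rfl⟩ := exists_eq_vecMulVec_of_mrank_le_one hZ
  obtain ⟨hc, hs⟩ := ne_zero_and_ne_zero_of_vecMulVec_ne_zero hZ₀
  by_cases hv : ∃ a : D, a • s = v
  · obtain ⟨a, rfl⟩ := hv
    right
    rw [range_vecMulVec_left_eq_of_vecMulVec_eq hts (hts ▸ hZ₀)]
    exact ⟨MulOpposite.op a • u, (vecMulVec_smul' u a s).symm⟩
  · simp only [not_exists] at hv
    exact Or.inl (vecMulVec_mem_range_of_mrank_sub_le_one hc
      ((LinearIndependent.pair_iff' hs).mpr hv) hZZ₀)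

end Adjacency

theorem range_add_const_eq_range {G H : Type*} [AddGroup G] [AddGroup H] (f : G →+ H) {A : H}
    (h₀ : (0 : H) ∈ Set.range fun x => f x + A) : (Set.range fun x => f x + A) = Set.range f := by
  obtain ⟨x₀, hx₀⟩ := h₀
  have : (fun x => f x + A) = f ∘ (· - x₀) := funext fun x => by
    rw [Function.comp_apply, map_sub, sub_eq_add_neg, ← eq_neg_of_add_eq_zero_right hx₀]
  rw [this, Function.Surjective.range_comp fun x => ⟨x + x₀, add_sub_cancel_right x x₀⟩]

section MaximalSets

variable {D : Type} [DivisionRing D] {m n : ℕ}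

theorem M1set_eq_range (hm : 0 < m) :
    M1set D m n = Set.range (vecMulVec (Pi.single (⟨0, hm⟩ : Fin m) 1)) := by
  ext X
  refine ⟨fun hX => ⟨X ⟨0, hm⟩, Matrix.ext fun i j => ?_⟩, ?_⟩
  · rcases eq_or_ne i ⟨0, hm⟩ with rfl | hi
    · simp [vecMulVec_apply]
    · rw [hX i j (Fin.val_ne_iff.mpr hi), vecMulVec_apply, Pi.single_eq_of_ne hi, zero_mul]
  · rintro ⟨r, rfl⟩ i j hi
    rw [vecMulVec_apply, Pi.single_eq_of_ne (Fin.val_ne_iff.mp hi), zero_mul]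

theorem N1set_eq_range (hn : 0 < n) :
    N1set D m n = Set.range fun t => vecMulVec t (Pi.single (⟨0, hn⟩ : Fin n) 1) := by
  ext X
  refine ⟨fun hX => ⟨fun i => X i ⟨0, hn⟩, Matrix.ext fun i j => ?_⟩, ?_⟩
  · beta_reduce
    rcases eq_or_ne j ⟨0, hn⟩ with rfl | hj
    · simp [vecMulVec_apply]
    · rw [hX i j (Fin.val_ne_iff.mpr hj), vecMulVec_apply, Pi.single_eq_of_ne hj, mul_zero]
  · rintro ⟨t, rfl⟩ i j hj
    beta_reduce
    rw [vecMulVec_apply, Pi.single_eq_of_ne (Fin.val_ne_iff.mp hj), mul_zero]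

theorem IsTypeOne.exists_eq_range_vecMulVec (hm : 0 < m) {S : Set (Matrix (Fin m) (Fin n) D)}
    (hS : IsTypeOne S) (h₀ : 0 ∈ S) : ∃ c : Fin m → D, c ≠ 0 ∧ S = Set.range (vecMulVec c) := by
  obtain ⟨P, A, hP, rfl⟩ := hS
  set c := P *ᵥ Pi.single (⟨0, hm⟩ : Fin m) 1
  have himage : (fun X => P * X + A) '' M1set D m n = Set.range fun r => vecMulVec c r + A := by
    rw [M1set_eq_range hm, ← Set.range_comp]
    simp only [Function.comp_def, mul_vecMulVec, c]
  rw [himage] at h₀ ⊢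
  refine ⟨c, fun hc => ?_, range_add_const_eq_range (AddMonoidHom.mk' _ (vecMulVec_add c)) h₀⟩
  obtain ⟨Q, hQ⟩ := hP.exists_left_inv
  have := congrArg (Q *ᵥ ·) hc
  simp only [c, mulVec_mulVec, hQ, one_mulVec, mulVec_zero] at this
  simpa using congr_fun this ⟨0, hm⟩

theorem IsTypeTwo.exists_eq_range_vecMulVec (hn : 0 < n) {S : Set (Matrix (Fin m) (Fin n) D)}
    (hS : IsTypeTwo S) (h₀ : 0 ∈ S) :
    ∃ r : Fin n → D, r ≠ 0 ∧ S = Set.range fun t => vecMulVec t r := by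
  obtain ⟨Q, A, hQ, rfl⟩ := hS
  set r := Pi.single (⟨0, hn⟩ : Fin n) (1 : D) ᵥ* Q
  have himage : (fun X => X * Q + A) '' N1set D m n = Set.range fun t => vecMulVec t r + A := by
    rw [N1set_eq_range hn, ← Set.range_comp]
    simp only [Function.comp_def, vecMulVec_mul, r]
  rw [himage] at h₀ ⊢
  refine ⟨r, fun hr => ?_, range_add_const_eq_range (AddMonoidHom.mk' _ (add_vecMulVec · · r)) h₀⟩
  obtain ⟨Q', hQ'⟩ := hQ.exists_right_inv
  have := congrArg (· ᵥ* Q') hr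
  simp only [r, vecMul_vecMul, hQ', vecMul_one, zero_vecMul] at this
  simpa using congr_fun this ⟨0, hn⟩

theorem IsTypeOne.eq_of_mem_of_mem (hm : 0 < m) {S T : Set (Matrix (Fin m) (Fin n) D)}
    (hS : IsTypeOne S) (hT : IsTypeOne T) (hS₀ : 0 ∈ S) (hT₀ : 0 ∈ T)
    {Z : Matrix (Fin m) (Fin n) D} (hZS : Z ∈ S) (hZT : Z ∈ T) (hZ : Z ≠ 0) : S = T := by
  obtain ⟨c, -, rfl⟩ := hS.exists_eq_range_vecMulVec hm hS₀
  obtain ⟨c', -, rfl⟩ := hT.exists_eq_range_vecMulVec hm hT₀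
  obtain ⟨s, rfl⟩ := hZS
  obtain ⟨s', hs'⟩ := hZT
  exact range_vecMulVec_eq_of_vecMulVec_eq hs'.symm hZ

theorem IsTypeTwo.eq_of_mem_of_mem (hn : 0 < n) {S T : Set (Matrix (Fin m) (Fin n) D)}
    (hS : IsTypeTwo S) (hT : IsTypeTwo T) (hS₀ : 0 ∈ S) (hT₀ : 0 ∈ T)
    {Z : Matrix (Fin m) (Fin n) D} (hZS : Z ∈ S) (hZT : Z ∈ T) (hZ : Z ≠ 0) : S = T := by
  obtain ⟨r, -, rfl⟩ := hS.exists_eq_range_vecMulVec hn hS₀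
  obtain ⟨r', -, rfl⟩ := hT.exists_eq_range_vecMulVec hn hT₀
  obtain ⟨t, rfl⟩ := hZS
  obtain ⟨t', ht'⟩ := hZT
  exact range_vecMulVec_left_eq_of_vecMulVec_eq ht'.symm hZ

theorem IsMaximalSet.exists_mrank_eq_one_mem (hm : 0 < m) (hn : 0 < n)
    {M : Set (Matrix (Fin m) (Fin n) D)} (hM : IsMaximalSet M) (h₀ : 0 ∈ M) :
    ∃ Y ∈ M, mrank Y = 1 := by
  rcases hM with hM | hM
  · obtain ⟨c, hc, rfl⟩ := hM.exists_eq_range_vecMulVec hm h₀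
    exact ⟨_, ⟨Pi.single ⟨0, hn⟩ 1, rfl⟩, mrank_vecMulVec hc (by simp)⟩
  · obtain ⟨r, hr, rfl⟩ := hM.exists_eq_range_vecMulVec hn h₀
    exact ⟨_, ⟨Pi.single ⟨0, hm⟩ 1, rfl⟩, mrank_vecMulVec (by simp) hr⟩

theorem IsMaximalSet.exists_mrank_eq_one_mem_mrank_sub_eq_one (hm : 0 < m) (hn : 0 < n)
    {M : Set (Matrix (Fin m) (Fin n) D)} (hM : IsMaximalSet M) (h₀ : 0 ∈ M)
    {X : Matrix (Fin m) (Fin n) D} (hX : mrank X ≤ 1) (hXM : X ∉ M) :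
    ∃ Y ∈ M, mrank Y = 1 ∧ mrank (X - Y) = 1 := by
  obtain ⟨a, b, rfl⟩ := exists_eq_vecMulVec_of_mrank_le_one hX
  obtain ⟨ha, hb⟩ := ne_zero_and_ne_zero_of_vecMulVec_ne_zero (ne_of_mem_of_not_mem h₀ hXM).symm
  rcases hM with hM | hM
  · obtain ⟨c, hc, rfl⟩ := hM.exists_eq_range_vecMulVec hm h₀
    refine ⟨vecMulVec c b, ⟨b, rfl⟩, mrank_vecMulVec hc hb, ?_⟩
    rw [← sub_vecMulVec]
    exact mrank_vecMulVec (sub_ne_zero.mpr fun hac => hXM ⟨b, hac ▸ rfl⟩) hb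
  · obtain ⟨r, hr, rfl⟩ := hM.exists_eq_range_vecMulVec hn h₀
    refine ⟨vecMulVec a r, ⟨a, rfl⟩, mrank_vecMulVec ha hr, ?_⟩
    rw [← vecMulVec_sub]
    exact mrank_vecMulVec ha (sub_ne_zero.mpr fun hbr => hXM ⟨a, hbr ▸ rfl⟩)

end MaximalSets

section Homomorphisms

variable {D D' : Type} [DivisionRing D] [DivisionRing D'] {m n m' n' : ℕ}
  {φ : Matrix (Fin m) (Fin n) D → Matrix (Fin m') (Fin n') D'}

theorem mrank_apply_eq_one (hhom : ∀ X Y, mrank (X - Y) = 1 → mrank (φ X - φ Y) = 1)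
    (h0 : φ 0 = 0) {X : Matrix (Fin m) (Fin n) D} (hX : mrank X = 1) : mrank (φ X) = 1 := by
  simpa [h0] using hhom X 0 (by simpa using hX)

theorem degenerate_of_image_subset_inter (hm : 0 < m) (hn : 0 < n) (hm' : 0 < m') (hn' : 0 < n')
    (hhom : ∀ X Y, mrank (X - Y) = 1 → mrank (φ X - φ Y) = 1) (h0 : φ 0 = 0)
    {M : Set (Matrix (Fin m) (Fin n) D)} (hM : IsMaximalSet M) (h0M : 0 ∈ M)
    {Ms Ns : Set (Matrix (Fin m') (Fin n') D')} (hMs : IsTypeOne Ms) (hNs : IsTypeTwo Ns)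
    (hφMs : φ '' M ⊆ Ms) (hφNs : φ '' M ⊆ Ns) : Degenerate φ := by
  have hφ0 : φ 0 ∈ φ '' M := ⟨0, h0M, rfl⟩
  refine ⟨0, (mrank_eq_zero_iff.mpr rfl).trans_le zero_le_one, Ms, Ns, hMs, hNs,
    ⟨hφMs hφ0, hφNs hφ0⟩, ?_⟩
  obtain ⟨c, -, rfl⟩ := hMs.exists_eq_range_vecMulVec hm' (h0 ▸ hφMs hφ0)
  obtain ⟨r, -, rfl⟩ := hNs.exists_eq_range_vecMulVec hn' (h0 ▸ hφNs hφ0)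
  rintro _ ⟨X, hX, rfl⟩
  replace hX : mrank X ≤ 1 := by simpa using hX
  by_cases hXM : X ∈ M
  · exact Or.inl (hφMs ⟨X, hXM, rfl⟩)
  obtain ⟨Y, hYM, hY, hXY⟩ := hM.exists_mrank_eq_one_mem_mrank_sub_eq_one hm hn h0M hX hXM
  have hφX := mrank_apply_eq_one hhom h0
    (mrank_eq_one_of_mrank_le_one hX (ne_of_mem_of_not_mem h0M hXM).symm)
  have hφY : φ Y ≠ 0 := mrank_eq_zero_iff.not.mp (by simp [mrank_apply_eq_one hhom h0 hY])
  exact mem_range_union_of_mrank_le_one_of_mrank_sub_le_one (hφMs ⟨Y, hYM, rfl⟩)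
    (hφNs ⟨Y, hYM, rfl⟩) hφY hφX.le (hhom X Y hXY).le

end Homomorphisms

/-- Lemma 3.7(c): `M'` is the unique maximal set containing `φ(M)`, and `φ(M)` is not contained
in any line of `M'` (a line of `M'` being `M' ∩ N'` for a maximal set `N'` of the other type
meeting `M'`). -/
theorem nondegenerate_image_unique_maximal_set_and_no_line
    {D D' : Type} [DivisionRing D] [DivisionRing D'] {m n m' n' : ℕ}
    (hm : 2 ≤ m) (hn : 2 ≤ n) (hm' : 2 ≤ m') (hn' : 2 ≤ n')
    (φ : Matrix (Fin m) (Fin n) D → Matrix (Fin m') (Fin n') D')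
    (hhom : ∀ X Y, mrank (X - Y) = 1 → mrank (φ X - φ Y) = 1)
    (hnd : ¬ Degenerate φ) (h0 : φ 0 = 0)
    (M : Set (Matrix (Fin m) (Fin n) D)) (hMmax : IsMaximalSet M)
    (h0M : (0 : Matrix (Fin m) (Fin n) D) ∈ M)
    (M' : Set (Matrix (Fin m') (Fin n') D')) (hM'max : IsMaximalSet M')
    (hφM : φ '' M ⊆ M') :
    (∀ S : Set (Matrix (Fin m') (Fin n') D'), IsMaximalSet S → φ '' M ⊆ S → S = M') ∧
    (∀ N' : Set (Matrix (Fin m') (Fin n') D'), IsMaximalSet N' →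
      ((IsTypeOne M' ∧ IsTypeTwo N') ∨ (IsTypeTwo M' ∧ IsTypeOne N')) →
      (M' ∩ N').Nonempty → ¬ φ '' M ⊆ M' ∩ N') := by
  have degenerate : ∀ {Ms Ns : Set (Matrix (Fin m') (Fin n') D')}, IsTypeOne Ms → IsTypeTwo Ns →
      φ '' M ⊆ Ms → φ '' M ⊆ Ns → Degenerate φ :=
    degenerate_of_image_subset_inter (by omega) (by omega) (by omega) (by omega) hhom h0 hMmax h0M
  have hφ0 : (0 : Matrix (Fin m') (Fin n') D') ∈ φ '' M := ⟨0, h0M, h0⟩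
  obtain ⟨Y, hYM, hY⟩ := hMmax.exists_mrank_eq_one_mem (by omega) (by omega) h0M
  have hφY : φ Y ≠ 0 := mrank_eq_zero_iff.not.mp (by simp [mrank_apply_eq_one hhom h0 hY])
  have hφYM : φ Y ∈ φ '' M := ⟨Y, hYM, rfl⟩
  refine ⟨fun S hS hφS => ?_, ?_⟩
  · rcases hS with hS | hS <;> rcases hM'max with hM' | hM'
    · exact hS.eq_of_mem_of_mem (by omega) hM' (hφS hφ0) (hφM hφ0) (hφS hφYM) (hφM hφYM) hφY
    · exact absurd (degenerate hS hM' hφS hφM) hnd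
    · exact absurd (degenerate hM' hS hφM hφS) hnd
    · exact hS.eq_of_mem_of_mem (by omega) hM' (hφS hφ0) (hφM hφ0) (hφS hφYM) (hφM hφYM) hφY
  · rintro N' - (⟨hM', hN'⟩ | ⟨hM', hN'⟩) - hsub
    · exact hnd (degenerate hM' hN' hφM (hsub.trans Set.inter_subset_right))
    · exact hnd (degenerate hN' hM' (hsub.trans Set.inter_subset_right) hφM)
end
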